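/- arXiv:1709.03908 — 3 statements merged into one kernel-verified Lean document; each statement's English description precedes it below -/
import Mathlib

section
/- Let γ ∈ F_{q^{2n}} with N_{q^{2n}/q}(γ) a non-square in F_q, and write γ^{q^s+1} = u + vγ with u, v ∈ F_{q^n} (such u,v exist since {1,γ} is an F_{q^n}-basis of F_{q^{2n}}). Then the binary operation on F_{q^n}^2 defined by (c,d)*(a,b) = (ac + b d^{q^s} u, ad + b c^{q^s} + b d^{q^s} v) makes (F_{q^n}^2, +, *) a (pre)semifield: * is biadditive and has no zero divisors. -/
/-- The Hughes–Kleinfeld multiplication on pairs: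
`(c,d) * (a,b) = (ac + b d^{q^s} u, ad + b c^{q^s} + b d^{q^s} v)`. -/
def HKmul (q s : ℕ) {K : Type*} [Field K] (u v : K) (x y : K × K) : K × K :=
  (y.1 * x.1 + y.2 * x.2 ^ q ^ s * u,
   y.1 * x.2 + y.2 * x.1 ^ q ^ s + y.2 * x.2 ^ q ^ s * v)

/-!
Identify `(c, d)` with `x = c + dγ ∈ F_{q^{2n}}`; by `γ^{q^s+1} = u + vγ`, `(c, d) * (a, b)` then
corresponds to `a x + b x^{q^s} γ`. If this vanishes with `x ≠ 0` and `b ≠ 0`, then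
`γ x^{q^s} = w x` for `w = -a/b ∈ F_{q^n}`. Apply the norm `N(y) = y^{1 + q + ⋯ + q^{2n-1}}`: norms lie
in `F_q`, so `N(x^{q^s}) = N(x)^{q^s} = N(x)`, whence `N(γ) = N(w)`. But `N(w) = N_{q^n/q}(w)^2` is a
square in `F_q`. If `x = 0` but `d ≠ 0`, then `γ = -c/d ∈ F_{q^n}` and the same contradiction arises.
-/

open Finset

theorem pow_pow_pow_eq_self {M : Type*} [Monoid M] {q : ℕ} {z : M} (hz : z ^ q = z) (s : ℕ) :
    z ^ q ^ s = z := by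
  induction s with
  | zero => simp
  | succ s ih => rw [pow_succ, pow_mul, ih, hz]

section MonoidWithZero

variable {M : Type*} [CommMonoidWithZero M] [IsCancelMulZero M] {q n : ℕ} {w : M}

theorem pow_geom_sum_pow_eq_self (hq : q ≠ 0) (hw : w ^ q ^ n = w) :
    (w ^ ∑ i ∈ range n, q ^ i) ^ q = w ^ ∑ i ∈ range n, q ^ i := by
  rcases eq_or_ne w 0 with rfl | hw0
  · rcases eq_or_ne (∑ i ∈ range n, q ^ i) 0 with h | h <;> simp [h, hq]
  refine mul_right_cancel₀ hw0 ?_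
  calc (w ^ ∑ i ∈ range n, q ^ i) ^ q * w = w ^ ∑ i ∈ range (n + 1), q ^ i := by
        rw [geom_sum_succ, ← pow_mul, pow_succ, mul_comm q]
    _ = (w ^ ∑ i ∈ range n, q ^ i) * w := by rw [geom_sum_succ', pow_add, hw, mul_comm]

theorem exists_pow_eq_self_sq_eq_pow_geom_sum_two_mul (hq : q ≠ 0) (hw : w ^ q ^ n = w) :
    ∃ z : M, z ^ q = z ∧ z ^ 2 = w ^ ∑ i ∈ range (2 * n), q ^ i := by
  refine ⟨w ^ ∑ i ∈ range n, q ^ i, pow_geom_sum_pow_eq_self hq hw, ?_⟩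
  simp_rw [two_mul, sum_range_add, pow_add q n, ← mul_sum, pow_add, pow_mul, hw, sq]

end MonoidWithZero

namespace FiniteField

variable {K : Type*} [Field K] [Fintype K] {q m : ℕ}

theorem one_lt_pow_of_card_eq_pow (hK : Fintype.card K = q ^ m) : 1 < q ^ m :=
  hK ▸ Fintype.one_lt_card

theorem ne_zero_of_card_eq_pow (hK : Fintype.card K = q ^ m) : q ≠ 0 := by
  rintro rfl
  have := one_lt_pow_of_card_eq_pow hK
  rcases eq_or_ne m 0 with rfl | hm <;> simp_all

theorem exp_ne_zero_of_card_eq_pow (hK : Fintype.card K = q ^ m) : m ≠ 0 := by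
  rintro rfl
  simpa using one_lt_pow_of_card_eq_pow hK

theorem exists_ringHom_eq_pow_pow_of_card_eq_pow (hK : Fintype.card K = q ^ m) (t : ℕ) :
    ∃ φ : K →+* K, ∀ x, φ x = x ^ q ^ t := by
  obtain ⟨p, hp⟩ := CharP.exists K
  obtain ⟨r, hp_prime, hcard⟩ := FiniteField.card K p
  have : Fact p.Prime := ⟨hp_prime⟩
  have hq_dvd : q ∣ p ^ (r : ℕ) := hcard ▸ hK ▸ dvd_pow_self q (exp_ne_zero_of_card_eq_pow hK)
  obtain ⟨k, -, rfl⟩ := (Nat.dvd_prime_pow hp_prime).mp hq_dvd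
  exact ⟨iterateFrobenius K p (k * t), fun x => by rw [iterateFrobenius_def, pow_mul]⟩

theorem neg_div_pow_pow_eq_self (hK : Fintype.card K = q ^ m) {t : ℕ} {a b : K}
    (ha : a ^ q ^ t = a) (hb : b ^ q ^ t = b) : (-a / b) ^ q ^ t = -a / b := by
  obtain ⟨φ, hφ⟩ := exists_ringHom_eq_pow_pow_of_card_eq_pow hK t
  rw [← hφ, map_div₀, map_neg, hφ, hφ, ha, hb]

theorem pow_pow_pow_geom_sum_eq (hK : Fintype.card K = q ^ m) (s : ℕ) (x : K) :
    (x ^ q ^ s) ^ ∑ i ∈ range m, q ^ i = x ^ ∑ i ∈ range m, q ^ i := by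
  have hx : x ^ q ^ m = x := hK ▸ FiniteField.pow_card x
  rw [← pow_mul, mul_comm, pow_mul]
  exact pow_pow_pow_eq_self (pow_geom_sum_pow_eq_self (ne_zero_of_card_eq_pow hK) hx) s

theorem pow_geom_sum_eq_of_mul_pow_pow_eq (hK : Fintype.card K = q ^ m) {s : ℕ} {γ w x : K}
    (hx : x ≠ 0) (h : γ * x ^ q ^ s = w * x) :
    γ ^ ∑ i ∈ range m, q ^ i = w ^ ∑ i ∈ range m, q ^ i := by
  have h' := congrArg (· ^ ∑ i ∈ range m, q ^ i) h
  simp only [mul_pow, pow_pow_pow_geom_sum_eq hK] at h'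
  exact mul_right_cancel₀ (pow_ne_zero _ hx) h'

end FiniteField

open FiniteField

section HughesKleinfeld

variable {K : Type*} [Field K] {q s m n : ℕ} {γ u v : K}

theorem HKmul_add_left [Fintype K] (hK : Fintype.card K = q ^ m) (x x' y : K × K) :
    HKmul q s u v (x + x') y = HKmul q s u v x y + HKmul q s u v x' y := by
  obtain ⟨φ, hφ⟩ := exists_ringHom_eq_pow_pow_of_card_eq_pow hK s
  simp only [HKmul, Prod.fst_add, Prod.snd_add, ← hφ, map_add, Prod.mk_add_mk]
  congr 1 <;> ring

theorem HKmul_add_right (x y y' : K × K) :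
    HKmul q s u v x (y + y') = HKmul q s u v x y + HKmul q s u v x y' := by
  simp only [HKmul, Prod.fst_add, Prod.snd_add, Prod.mk_add_mk]
  congr 1 <;> ring

theorem HKmul_fst_add_snd_mul [Fintype K] (hK : Fintype.card K = q ^ m)
    (hγuv : γ ^ (q ^ s + 1) = u + v * γ) (a b c d : K) :
    (HKmul q s u v (c, d) (a, b)).1 + (HKmul q s u v (c, d) (a, b)).2 * γ
      = a * (c + d * γ) + b * (c + d * γ) ^ q ^ s * γ := by
  obtain ⟨φ, hφ⟩ := exists_ringHom_eq_pow_pow_of_card_eq_pow hK s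
  have hfrob : (c + d * γ) ^ q ^ s = c ^ q ^ s + d ^ q ^ s * γ ^ q ^ s := by
    simp only [← hφ, map_add, map_mul]
  rw [pow_succ] at hγuv
  rw [hfrob, HKmul]
  linear_combination (-(b * d ^ q ^ s)) * hγuv

theorem eq_zero_of_add_mul_eq_zero [Fintype K] (hK : Fintype.card K = q ^ m)
    (hγ : ¬ ∃ z : K, z ^ q = z ∧ z ^ 2 = γ ^ (∑ i ∈ range (2 * n), q ^ i)) {c d : K}
    (hc : c ^ q ^ n = c) (hd : d ^ q ^ n = d) (h : c + d * γ = 0) : c = 0 ∧ d = 0 := by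
  have hd0 : d = 0 := by
    by_contra hd0
    have hγ_eq : γ = -c / d := by
      field_simp
      linear_combination h
    exact hγ (hγ_eq ▸ exists_pow_eq_self_sq_eq_pow_geom_sum_two_mul
      (ne_zero_of_card_eq_pow hK) (neg_div_pow_pow_eq_self hK hc hd))
  exact ⟨by simpa [hd0] using h, hd0⟩

theorem HKmul_eq_zero [Fintype K] (hK : Fintype.card K = q ^ (2 * n))
    (hγ : ¬ ∃ z : K, z ^ q = z ∧ z ^ 2 = γ ^ (∑ i ∈ range (2 * n), q ^ i))
    (hγuv : γ ^ (q ^ s + 1) = u + v * γ) {a b c d : K} (ha : a ^ q ^ n = a) (hb : b ^ q ^ n = b)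
    (hc : c ^ q ^ n = c) (hd : d ^ q ^ n = d) (h : HKmul q s u v (c, d) (a, b) = 0) :
    (c, d) = (0, 0) ∨ (a, b) = (0, 0) := by
  have key : a * (c + d * γ) + b * (c + d * γ) ^ q ^ s * γ = 0 := by
    rw [← HKmul_fst_add_snd_mul hK hγuv, h, Prod.fst_zero, Prod.snd_zero, zero_mul, add_zero]
  by_cases hx : c + d * γ = 0
  · obtain ⟨rfl, rfl⟩ := eq_zero_of_add_mul_eq_zero hK hγ hc hd hx
    exact Or.inl rfl
  have hb0 : b = 0 := by
    by_contra hb0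
    have hγ_pow : γ * (c + d * γ) ^ q ^ s = -a / b * (c + d * γ) := by
      field_simp
      linear_combination key
    refine hγ ?_
    rw [pow_geom_sum_eq_of_mul_pow_pow_eq hK hx hγ_pow]
    exact exists_pow_eq_self_sq_eq_pow_geom_sum_two_mul (ne_zero_of_card_eq_pow hK)
      (neg_div_pow_pow_eq_self hK ha hb)
  have ha0 : a = 0 := by simpa [hb0, hx] using key
  exact Or.inr (by rw [ha0, hb0])

end HughesKleinfeld

theorem HK_presemifield_general (q s n : ℕ)
    (K : Type*) [Field K] [Fintype K] (hK : Fintype.card K = q ^ (2 * n))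
    (γ u v : K)
    (hγ : ¬ ∃ z : K, z ^ q = z ∧ z ^ 2 = γ ^ (∑ i ∈ Finset.range (2 * n), q ^ i))
    (hγuv : γ ^ (q ^ s + 1) = u + v * γ) :
    (∀ x x' y : K × K, HKmul q s u v (x + x') y
        = HKmul q s u v x y + HKmul q s u v x' y) ∧
    (∀ x y y' : K × K, HKmul q s u v x (y + y')
        = HKmul q s u v x y + HKmul q s u v x y') ∧
    (∀ a b c d : K, a ^ q ^ n = a → b ^ q ^ n = b → c ^ q ^ n = c → d ^ q ^ n = d →
      HKmul q s u v (c, d) (a, b) = 0 → (c, d) = (0, 0) ∨ (a, b) = (0, 0)) :=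
  ⟨HKmul_add_left hK, HKmul_add_right, fun _ _ _ _ ha hb hc hd h =>
    HKmul_eq_zero hK hγ hγuv ha hb hc hd h⟩

/-- With `γ ∈ F_{q^{2n}}` of non-square norm, writing `γ^{q^s+1} = u + vγ` with
`u, v ∈ F_{q^n}`, the Hughes–Kleinfeld multiplication on `F_{q^n}²` is biadditive and
has no zero divisors, i.e. it makes `(F_{q^n}², +, *)` a presemifield. -/
theorem HK_presemifield (q s n : ℕ) (hn : 0 < n) (hs : Nat.Coprime s (2 * n))
    (K : Type*) [Field K] [Fintype K] (hK : Fintype.card K = q ^ (2 * n))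
    (γ u v : K) (hu : u ^ q ^ n = u) (hv : v ^ q ^ n = v)
    (hγ : ¬ ∃ z : K, z ^ q = z ∧ z ^ 2 = γ ^ (∑ i ∈ Finset.range (2 * n), q ^ i))
    (hγuv : γ ^ (q ^ s + 1) = u + v * γ) :
    (∀ x x' y : K × K, HKmul q s u v (x + x') y
        = HKmul q s u v x y + HKmul q s u v x' y) ∧
    (∀ x y y' : K × K, HKmul q s u v x (y + y')
        = HKmul q s u v x y + HKmul q s u v x y') ∧
    (∀ a b c d : K, a ^ q ^ n = a → b ^ q ^ n = b → c ^ q ^ n = c → d ^ q ^ n = d →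
      HKmul q s u v (c, d) (a, b) = 0 → (c, d) = (0, 0) ∨ (a, b) = (0, 0)) :=
  HK_presemifield_general q s n K hK γ u v hγ hγuv
end

section
/- Let 2 ≤ k ≤ 2n−2 and gcd(s,2n)=1, with γ ∈ F_{q^{2n}} such that N_{q^{2n}/q}(γ) is a non-square in F_q. Then the middle nucleus of D_{k,s}(γ), namely N_m(D) = { φ a linearized polynomial : f ∘ φ ∈ D for all f ∈ D }, equals { aX : a ∈ F_{q^n} }. -/
/-- `φ : K → K` is (induced by) a `q`-linearized polynomial modulo `X^{q^n} - X`. -/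
def IsLinPoly (q n : ℕ) {K : Type*} [Field K] (φ : K → K) : Prop :=
  ∃ a : Fin n → K, φ = fun x => ∑ i : Fin n, a i * x ^ q ^ (i : ℕ)

/-- The code `D_{k,s}(γ)` as a set of `F_q`-linear maps on `F_{q^{2n}}`. -/
def DFun (q s n k : ℕ) {K : Type*} [Field K] (γ : K) : Set (K → K) :=
  {f | ∃ a b : K, a ^ q ^ n = a ∧ b ^ q ^ n = b ∧ ∃ c : ℕ → K,
    f = fun x => a * x + (∑ i ∈ Finset.Ioo 0 k, c i * x ^ q ^ (s * i))
      + γ * b * x ^ q ^ (s * k)}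

/-! Write maps as `σ`-polynomials `∑ wᵢ σⁱ` with `σ = (· ^ q ^ s)` and `i ∈ ℤ/2n`; since
`gcd(s, 2n) = 1` the powers of `σ` are distinct characters of `K`, so by Artin's independence
of characters the coefficients are unique. As `id ∈ D`, a nucleus element `φ` lies in `D`, and
composing with the monomials `c σʲ ∈ D` (`0 < j < k`) shifts its coefficients by `j`. A nonzero
coefficient at an index `0 < m < k` is thus moved to index `k` with an arbitrary factor `c`,
although the `k`-th coefficients of `D` lie in the proper subset `γ 𝔽_{q^n}`; one at index `k` is
moved by `j = 1` to index `k + 1 < 2n`, where `D` has no terms. So `φ = a X` with `a ∈ 𝔽_{q^n}`.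
-/

open Finset

theorem exists_ne_mul_of_pow_ne_self {K : Type*} [Field K] {Q : ℕ} {z : K} (hz : z ^ Q ≠ z)
    (γ : K) : ∃ y : K, ∀ b : K, b ^ Q = b → y ≠ γ * b := by
  by_cases hγ : γ = 0
  · exact ⟨1, fun b _ => by simp [hγ]⟩
  · exact ⟨γ * z, fun b hb h => hz (mul_left_cancel₀ hγ h ▸ hb)⟩

section FrobeniusPowers

variable {K : Type*} [Field K] [Fintype K] {q e : ℕ}

theorem pow_q_pow_mod (hK : Fintype.card K = q ^ e) (x : K) (a : ℕ) :
    x ^ q ^ a = x ^ q ^ (a % e) := by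
  conv_lhs => rw [← Nat.div_add_mod a e, pow_add, pow_mul, pow_mul, ← hK,
    FiniteField.pow_card_pow]

theorem pow_q_pow_congr (hK : Fintype.card K = q ^ e) {a b : ℕ} (h : a ≡ b [MOD e]) (x : K) :
    x ^ q ^ a = x ^ q ^ b := by
  rw [pow_q_pow_mod hK x a, pow_q_pow_mod hK x b, h]

theorem two_le_of_card_eq_pow (hK : Fintype.card K = q ^ e) (he : e ≠ 0) : 2 ≤ q := by
  have h := Fintype.one_lt_card (α := K)
  rw [hK, Nat.one_lt_pow_iff he] at h
  exact h

theorem eq_of_forall_pow_q_pow_eq (hK : Fintype.card K = q ^ e) {a b : ℕ} (ha : a < e)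
    (hb : b < e) (h : ∀ x : K, x ^ q ^ a = x ^ q ^ b) : a = b := by
  have hq := two_le_of_card_eq_pow hK (by omega)
  by_contra hab
  have hne : q ^ a ≠ q ^ b := fun h' => hab (Nat.pow_right_injective hq h')
  have hP : (Polynomial.X ^ q ^ a - Polynomial.X ^ q ^ b : Polynomial K) = 0 := by
    refine Polynomial.eq_zero_of_natDegree_lt_card_of_eval_eq_zero' _ univ
      (fun x _ => by simp [h x]) ?_
    rw [card_univ, hK]
    refine (Polynomial.natDegree_sub_le _ _).trans_lt ?_
    simp only [Polynomial.natDegree_X_pow, max_lt_iff]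
    exact ⟨Nat.pow_lt_pow_right hq ha, Nat.pow_lt_pow_right hq hb⟩
  simpa [Polynomial.coeff_X_pow, hne] using congrArg (Polynomial.coeff · (q ^ a)) hP

theorem exists_pow_q_pow_ne_self (hK : Fintype.card K = q ^ e) {n : ℕ} (hn : 0 < n)
    (hne : n < e) : ∃ z : K, z ^ q ^ n ≠ z := by
  by_contra! h
  exact hn.ne' (eq_of_forall_pow_q_pow_eq hK hne (hn.trans hne) (by simpa using h))

theorem exists_eq_ringChar_pow (hK : Fintype.card K = q ^ e) (he : e ≠ 0) :
    ∃ t, q = ringChar K ^ t := by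
  have hp := CharP.char_is_prime K (ringChar K)
  obtain ⟨d, -, hcard⟩ := FiniteField.card K (ringChar K)
  have hdvd : q ∣ ringChar K ^ (d : ℕ) := hcard ▸ hK ▸ dvd_pow_self q he
  obtain ⟨t, -, ht⟩ := (Nat.dvd_prime_pow hp).mp hdvd
  exact ⟨t, ht⟩

theorem sum_pow_q_pow (hK : Fintype.card K = q ^ e) (he : e ≠ 0) (N : ℕ) {ι : Type*}
    (S : Finset ι) (f : ι → K) : (∑ i ∈ S, f i) ^ q ^ N = ∑ i ∈ S, f i ^ q ^ N := by
  obtain ⟨t, ht⟩ := exists_eq_ringChar_pow hK he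
  have : ExpChar K (ringChar K) := .prime (CharP.char_is_prime K _)
  rw [ht, ← pow_mul]
  exact sum_pow_char_pow _ _ _ _

end FrobeniusPowers

section SigmaPoly

variable {K : Type*} [Field K] {q e : ℕ} [NeZero e]

theorem sum_val_eq_sum_range {M : Type*} [AddCommMonoid M] (f : ℕ → M) :
    ∑ i : ZMod e, f i.val = ∑ m ∈ range e, f m := by
  obtain ⟨e', rfl⟩ := Nat.exists_eq_succ_of_ne_zero (NeZero.ne e)
  exact Fin.sum_univ_eq_sum_range f _

/-- The `σ`-polynomial `∑ wᵢ σⁱ` for `σ = (· ^ q ^ s)`, indexed by `ZMod e` since `σ^e = id`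
when `Fintype.card K = q ^ e`. -/
def sigmaPoly (q s : ℕ) (w : ZMod e → K) (x : K) : K :=
  ∑ i : ZMod e, w i * x ^ q ^ (s * i.val)

theorem sigmaPoly_injective [Fintype K] (hK : Fintype.card K = q ^ e) {s : ℕ}
    (hs : s.Coprime e) : Function.Injective (sigmaPoly (K := K) (e := e) q s) := by
  have he : 0 < e := Nat.pos_of_neZero e
  let χ : ZMod e → (K →* K) := fun i => powMonoidHom (q ^ (s * i.val))
  have hχ : Function.Injective χ := by
    intro i j hij
    have hmod : (s * i.val) % e = (s * j.val) % e := by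
      refine eq_of_forall_pow_q_pow_eq hK (Nat.mod_lt _ he) (Nat.mod_lt _ he) fun x => ?_
      rw [← pow_q_pow_mod hK, ← pow_q_pow_mod hK]
      exact DFunLike.congr_fun hij x
    have hcast : (s : ZMod e) * i = s * j := by
      simpa using (ZMod.natCast_eq_natCast_iff' _ _ _).mpr hmod
    exact (ZMod.unitOfCoprime s hs).isUnit.mul_left_cancel hcast
  have hli := (linearIndependent_monoidHom K K).comp χ hχ
  intro w w' h
  funext i
  refine sub_eq_zero.mp (Fintype.linearIndependent_iff.mp hli (w - w') ?_ i)
  funext x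
  simpa [sub_mul, χ, sigmaPoly, sub_eq_zero] using congrFun h x

theorem comp_sigmaPoly [Fintype K] (hK : Fintype.card K = q ^ e) (s j : ℕ) (c : K)
    (w : ZMod e → K) :
    (fun x => c * x ^ q ^ (s * j)) ∘ sigmaPoly q s w
      = sigmaPoly q s (fun i => c * w (i - (j : ZMod e)) ^ q ^ (s * j)) := by
  funext x
  simp only [Function.comp_apply, sigmaPoly]
  rw [sum_pow_q_pow hK (NeZero.ne e), mul_sum]
  refine Fintype.sum_equiv (Equiv.addRight (j : ZMod e)) _ _ fun i => ?_
  have hexp : s * i.val + s * j ≡ s * (i + j).val [MOD e] := by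
    rw [← ZMod.natCast_eq_natCast_iff]
    push_cast [ZMod.natCast_val, ZMod.cast_id]
    ring
  rw [Equiv.coe_addRight, add_sub_cancel_right, mul_pow, ← pow_mul, ← pow_add,
    pow_q_pow_congr hK hexp, mul_assoc]

theorem sigmaPoly_eq_mul_of_eq_zero {s : ℕ} {w : ZMod e → K} (hw : ∀ i ≠ 0, w i = 0) :
    sigmaPoly q s w = fun x => w 0 * x := by
  funext x
  rw [sigmaPoly, Fintype.sum_eq_single 0 fun i hi => by rw [hw i hi, zero_mul]]
  simp

end SigmaPoly

section CodeD

variable {K : Type*} [Field K] {q s n k e : ℕ} {γ : K}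

def DCoeffs (e q n k : ℕ) (γ : K) : Set (ZMod e → K) :=
  {w | w 0 ^ q ^ n = w 0 ∧ (∃ b, b ^ q ^ n = b ∧ w k = γ * b) ∧
    ∀ i : ZMod e, k < i.val → w i = 0}

theorem exists_sigmaPoly_of_mem_DFun [NeZero e] (hk : 0 < k) (hke : k < e) {f : K → K}
    (hf : f ∈ DFun q s n k γ) : ∃ w ∈ DCoeffs e q n k γ, f = sigmaPoly q s w := by
  obtain ⟨a, b, ha, hb, c, rfl⟩ := hf
  let W : ℕ → K := fun m =>
    if m = 0 then a else if m < k then c m else if m = k then γ * b else 0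
  refine ⟨fun i => W i.val, ⟨by simpa [W] using ha, ⟨b, hb, ?_⟩, fun i hi => ?_⟩, ?_⟩
  · simp [W, ZMod.val_cast_of_lt hke, hk.ne']
  · simp only [W]
    rw [if_neg (by omega), if_neg (by omega), if_neg (by omega)]
  · funext x
    set X : ℕ → K := fun m => x ^ q ^ (s * m)
    calc a * x + ∑ i ∈ Ioo 0 k, c i * X i + γ * b * X k
        = W 0 * X 0 + ∑ m ∈ Ico 1 k, W m * X m + W k * X k := by
          rw [← zero_add 1, Finset.Ico_add_one_left_eq_Ioo]
          congr 2
          · simp [W, X]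
          · exact sum_congr rfl fun m hm => by
              rw [mem_Ioo] at hm
              simp only [W]
              rw [if_neg (by omega), if_pos hm.2]
          · simp [W, hk.ne']
      _ = ∑ m ∈ range (k + 1), W m * X m := by
          rw [sum_range_succ, range_eq_Ico, sum_eq_sum_Ico_succ_bot hk]
      _ = ∑ m ∈ range e, W m * X m := by
          refine sum_subset (range_subset_range.mpr hke) fun m hm hmk => ?_
          simp only [mem_range] at hm hmk
          simp only [W]
          rw [if_neg (by omega), if_neg (by omega), if_neg (by omega), zero_mul]
      _ = sigmaPoly q s (fun i => W i.val) x := (sum_val_eq_sum_range _).symm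

theorem mem_DCoeffs_of_sigmaPoly_mem_DFun [Fintype K] [NeZero e]
    (hK : Fintype.card K = q ^ e) (hs : s.Coprime e) (hk : 0 < k) (hke : k < e)
    {w : ZMod e → K} (h : sigmaPoly q s w ∈ DFun q s n k γ) : w ∈ DCoeffs e q n k γ := by
  obtain ⟨w', hw', heq⟩ := exists_sigmaPoly_of_mem_DFun hk hke h
  rwa [sigmaPoly_injective hK hs heq]

theorem monomial_mem_DFun (hq : q ≠ 0) {j : ℕ} (hj : 0 < j) (hjk : j < k) (c : K) :
    (fun x => c * x ^ q ^ (s * j)) ∈ DFun q s n k γ := by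
  refine ⟨0, 0, zero_pow (pow_ne_zero _ hq), zero_pow (pow_ne_zero _ hq),
    fun i => if i = j then c else 0, ?_⟩
  funext x
  simp [ite_mul, hj, hjk]

theorem id_mem_DFun (hq : q ≠ 0) : id ∈ DFun q s n k γ :=
  ⟨1, 0, one_pow _, zero_pow (pow_ne_zero _ hq), 0, by funext x; simp⟩

theorem comp_mul_mem_DFun {a : K} (ha : a ^ q ^ n = a) {f : K → K}
    (hf : f ∈ DFun q s n k γ) : f ∘ (a * ·) ∈ DFun q s n k γ := by
  obtain ⟨a', b', ha', hb', c', rfl⟩ := hf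
  refine ⟨a' * a, b' * a ^ q ^ (s * k), by rw [mul_pow, ha', ha], ?_,
    fun i => c' i * a ^ q ^ (s * i), ?_⟩
  · rw [mul_pow, hb', ← pow_mul, mul_comm (q ^ (s * k)), pow_mul, ha]
  · funext x
    have hsum : ∑ i ∈ Ioo 0 k, c' i * (a * x) ^ q ^ (s * i)
        = ∑ i ∈ Ioo 0 k, c' i * a ^ q ^ (s * i) * x ^ q ^ (s * i) :=
      sum_congr rfl fun i _ => by ring
    simp only [Function.comp_apply]
    rw [hsum]
    ring

theorem isLinPoly_mul_left (he : 0 < e) (a : K) : IsLinPoly q e (a * ·) :=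
  ⟨Pi.single ⟨0, he⟩ a, by funext x; simp [Pi.single_apply, ite_mul]⟩

theorem eq_zero_of_shift_mem_DCoeffs [NeZero e] (hk : 2 ≤ k) (hke : k + 2 ≤ e) {z : K}
    (hz : z ^ q ^ n ≠ z) {u : ZMod e → K} (hu : u ∈ DCoeffs e q n k γ)
    (hshift : ∀ j, 0 < j → j < k → ∀ c : K,
      (fun i => c * u (i - (j : ZMod e)) ^ q ^ (s * j)) ∈ DCoeffs e q n k γ)
    {m : ZMod e} (hm : m ≠ 0) : u m = 0 := by
  have hm0 : m.val ≠ 0 := (ZMod.val_ne_zero m).mpr hm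
  rcases lt_trichotomy m.val k with hlt | heq | hgt
  · by_contra hum
    obtain ⟨y, hy⟩ := exists_ne_mul_of_pow_ne_self hz γ
    obtain ⟨-, ⟨b, hb, hkb⟩, -⟩ := hshift (k - m.val) (by omega) (by omega)
      (y / u m ^ q ^ (s * (k - m.val)))
    have hkm : (k : ZMod e) - ((k - m.val : ℕ) : ZMod e) = m := by
      rw [Nat.cast_sub hlt.le, sub_sub_cancel, ZMod.natCast_zmod_val]
    beta_reduce at hkb
    rw [hkm, div_mul_cancel₀ _ (pow_ne_zero _ hum)] at hkb
    exact hy b hb hkb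
  · have hval : (m + 1).val = k + 1 := by
      rw [← ZMod.natCast_zmod_val m, ← Nat.cast_add_one, ZMod.val_cast_of_lt (by omega), heq]
    have h := (hshift 1 one_pos (by omega) 1).2.2 (m + 1) (by omega)
    simp only [Nat.cast_one, add_sub_cancel_right, one_mul] at h
    exact (pow_eq_zero_iff'.mp h).1
  · exact hu.2.2 m hgt

end CodeD

def middleNucleus (q e : ℕ) {K : Type*} [Field K] (C : Set (K → K)) : Set (K → K) :=
  {φ | IsLinPoly q e φ ∧ ∀ f ∈ C, f ∘ φ ∈ C}

theorem middleNucleus_DFun {K : Type*} [Field K] [Fintype K] {q s n k e : ℕ} [NeZero e]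
    {γ : K} (hK : Fintype.card K = q ^ e) (hs : s.Coprime e) (hk : 2 ≤ k) (hke : k + 2 ≤ e)
    (hn : 0 < n) (hne : n < e) :
    middleNucleus q e (DFun q s n k γ) = {φ | ∃ a, a ^ q ^ n = a ∧ φ = fun x => a * x} := by
  have hq : q ≠ 0 := by have := two_le_of_card_eq_pow hK (NeZero.ne e); omega
  ext φ
  constructor
  · rintro ⟨-, hφ⟩
    have hφD : φ ∈ DFun q s n k γ := hφ id (id_mem_DFun hq)
    obtain ⟨u, hu, rfl⟩ := exists_sigmaPoly_of_mem_DFun (e := e) (by omega) (by omega) hφD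
    obtain ⟨z, hz⟩ := exists_pow_q_pow_ne_self hK hn hne
    have hshift (j : ℕ) (hj : 0 < j) (hjk : j < k) (c : K) :
        (fun i => c * u (i - (j : ZMod e)) ^ q ^ (s * j)) ∈ DCoeffs e q n k γ :=
      mem_DCoeffs_of_sigmaPoly_mem_DFun hK hs (by omega) (by omega)
        (comp_sigmaPoly hK s j c u ▸ hφ _ (monomial_mem_DFun hq hj hjk c))
    exact ⟨u 0, hu.1, sigmaPoly_eq_mul_of_eq_zero fun m hm =>
      eq_zero_of_shift_mem_DCoeffs hk hke hz hu hshift hm⟩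
  · rintro ⟨a, ha, rfl⟩
    exact ⟨isLinPoly_mul_left (Nat.pos_of_neZero e) a, fun f hf => comp_mul_mem_DFun ha hf⟩

theorem D_code_middle_nucleus_general (q s n k : ℕ) (hs : Nat.Coprime s (2 * n))
    (hk1 : 2 ≤ k) (hk2 : k ≤ 2 * n - 2)
    (K : Type*) [Field K] [Fintype K] (hK : Fintype.card K = q ^ (2 * n))
    (γ : K) :
    {φ : K → K | IsLinPoly q (2 * n) φ ∧
        ∀ f ∈ DFun q s n k γ, f ∘ φ ∈ DFun q s n k γ}
      = {φ : K → K | ∃ a : K, a ^ q ^ n = a ∧ φ = fun x => a * x} := by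
  have : NeZero (2 * n) := ⟨by omega⟩
  exact middleNucleus_DFun hK hs hk1 (by omega) (by omega) (by omega)

/-- For `2 ≤ k ≤ 2n-2`, the middle nucleus
`N_m(D_{k,s}(γ)) = { φ linearized : f ∘ φ ∈ D for all f ∈ D }` equals
`{ aX : a ∈ F_{q^n} }`. -/
theorem D_code_middle_nucleus (q s n k : ℕ) (hn : 0 < n) (hs : Nat.Coprime s (2 * n))
    (hk1 : 2 ≤ k) (hk2 : k ≤ 2 * n - 2)
    (K : Type*) [Field K] [Fintype K] (hK : Fintype.card K = q ^ (2 * n))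
    (γ : K)
    (hγ : ¬ ∃ z : K, z ^ q = z ∧ z ^ 2 = γ ^ (∑ i ∈ Finset.range (2 * n), q ^ i)) :
    {φ : K → K | IsLinPoly q (2 * n) φ ∧
        ∀ f ∈ DFun q s n k γ, f ∘ φ ∈ DFun q s n k γ}
      = {φ : K → K | ∃ a : K, a ^ q ^ n = a ∧ φ = fun x => a * x} :=
  D_code_middle_nucleus_general q s n k hs hk1 hk2 K hK γ
end

section
/- Let γ, θ ∈ F_{q^{2n}} have non-square norms N_{q^{2n}/q} in F_q, let gcd(s,2n)=gcd(t,2n)=1, and let 1 < k < 2n−1 with (k ≠ n or n ≥ 3). If D_{k,s}(γ) and D_{k,t}(θ) are equivalent via (φ_1, φ_2, ρ) (i.e., φ_1 ∘ f^ρ ∘ φ_2 ∈ D_{k,t}(θ) for all f ∈ D_{k,s}(γ), with φ_1, φ_2 linearized permutation polynomials of F_{q^{2n}}), then φ_1 and φ_2 are monomials, i.e., φ_1 = d X^{q^l} and φ_2 = g X^{q^j} for some nonzero d, g ∈ F_{q^{2n}} and integers l, j. -/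
open Finset Polynomial

section Frobenius

variable {K : Type*} [Field K] {q : ℕ}

theorem pow_pow_eq_of_natCast_eq [Fintype K] {N : ℕ} (hK : Fintype.card K = q ^ N) {a b : ℕ}
    (h : (a : ZMod N) = b) (x : K) : x ^ q ^ a = x ^ q ^ b := by
  have hmod : ∀ a, x ^ q ^ a = x ^ q ^ (a % N) := fun a => by
    conv_lhs => rw [← Nat.mod_add_div a N, pow_add, pow_mul q N, ← hK, pow_mul x,
      FiniteField.pow_card_pow]
  rw [hmod a, hmod b, (ZMod.natCast_eq_natCast_iff' a b N).1 h]

theorem one_lt_of_card_eq_pow [Fintype K] {N : ℕ} (hK : Fintype.card K = q ^ N) : 1 < q := by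
  by_contra! h
  have := Fintype.one_lt_card (α := K)
  have := pow_le_one₀ (n := N) (Nat.zero_le q) h
  omega

theorem exists_expChar_pow_eq [Fintype K] {N : ℕ} (hK : Fintype.card K = q ^ N) (hN : N ≠ 0) :
    ∃ p e : ℕ, ExpChar K p ∧ q = p ^ e := by
  obtain ⟨m, hp, hcard⟩ := FiniteField.card K (ringChar K)
  obtain ⟨e, -, he⟩ := (Nat.dvd_prime_pow hp).1 (hcard ▸ hK ▸ dvd_pow_self q hN)
  have : Fact (ringChar K).Prime := ⟨hp⟩
  exact ⟨ringChar K, e, inferInstance, he⟩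

variable {p e : ℕ} [ExpChar K p]

theorem sum_pow_pow (hqe : q = p ^ e) {ι : Type*} (s : Finset ι) (f : ι → K) (m : ℕ) :
    (∑ i ∈ s, f i) ^ q ^ m = ∑ i ∈ s, f i ^ q ^ m := by
  subst hqe
  simp_rw [← pow_mul]
  exact map_sum (iterateFrobenius K p (e * m)) f s

theorem add_pow_pow (hqe : q = p ^ e) (x y : K) (m : ℕ) :
    (x + y) ^ q ^ m = x ^ q ^ m + y ^ q ^ m := by
  subst hqe
  simp_rw [← pow_mul]
  exact add_pow_expChar_pow x y p (e * m)

end Frobenius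

section LinPoly

variable {K : Type*} [Field K] {q N : ℕ} [NeZero N]

/-- Exponents are indexed by `ZMod N` because `x ^ q ^ N = x` on a field with `q ^ N` elements. -/
def linPoly (q : ℕ) : (ZMod N → K) →ₗ[K] (K → K) where
  toFun c x := ∑ z, c z * x ^ q ^ z.val
  map_add' c d := by ext x; simp [add_mul, sum_add_distrib]
  map_smul' a c := by ext x; simp [mul_sum, mul_assoc]

theorem linPoly_apply (c : ZMod N → K) (x : K) : linPoly q c x = ∑ z, c z * x ^ q ^ z.val := rfl

theorem IsLinPoly.exists_eq_linPoly {φ : K → K} (h : IsLinPoly q N φ) :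
    ∃ c : ZMod N → K, φ = linPoly q c := by
  obtain ⟨M, rfl⟩ := Nat.exists_eq_succ_of_ne_zero (NeZero.ne N)
  obtain ⟨a, rfl⟩ := h
  exact ⟨a, rfl⟩

theorem linPoly_injective [Fintype K] (hq : 1 < q) (hK : Fintype.card K = q ^ N) :
    Function.Injective (linPoly (K := K) (N := N) q) := by
  rw [← LinearMap.ker_eq_bot, LinearMap.ker_eq_bot']
  intro c hc
  set P : K[X] := ∑ z, C (c z) * X ^ q ^ z.val
  have hP : P = 0 := by
    refine eq_zero_of_natDegree_lt_card_of_eval_eq_zero P Function.injective_id (fun x => ?_) ?_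
    · simpa [P, eval_finsetSum, linPoly_apply] using congrFun hc x
    · rw [hK]
      calc P.natDegree ≤ q ^ (N - 1) := natDegree_sum_le_of_forall_le _ _ fun z _ =>
              (natDegree_C_mul_X_pow_le _ _).trans
                (Nat.pow_le_pow_right (by omega) (Nat.le_sub_one_of_lt z.val_lt))
        _ < q ^ N := Nat.pow_lt_pow_right hq (Nat.sub_one_lt (NeZero.ne N))
  funext z
  have hcoeff : P.coeff (q ^ z.val) = c z := by
    simp [P, finsetSum_coeff, coeff_C_mul, coeff_X_pow, (Nat.pow_right_injective hq).eq_iff,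
      (ZMod.val_injective N).eq_iff]
  rw [← hcoeff, hP, coeff_zero, Pi.zero_apply]

theorem exists_ne_zero_of_injective {D : ZMod N → K} (h : Function.Injective (linPoly q D)) :
    ∃ a, D a ≠ 0 := by
  by_contra! h0
  have hD : D = 0 := funext h0
  exact zero_ne_one (h (a₁ := 0) (a₂ := 1) (by simp [hD]))

theorem exists_eq_monomial {D : ZMod N → K} (h : Function.Injective (linPoly q D))
    (hD : {a | D a ≠ 0}.Subsingleton) :
    ∃ (d : K) (l : ℕ), d ≠ 0 ∧ linPoly q D = fun x => d * x ^ q ^ l := by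
  obtain ⟨a, ha⟩ := exists_ne_zero_of_injective h
  refine ⟨D a, a.val, ha, funext fun x => Fintype.sum_eq_single a fun z hz => ?_⟩
  have hz0 : D z = 0 := by
    by_contra hz0
    exact hz (hD hz0 ha)
  rw [hz0, zero_mul]

theorem linPoly_apply_mul (c : ZMod N → K) (a x : K) :
    linPoly q c (a * x) = linPoly q (fun z => c z * a ^ q ^ z.val) x := by
  simp [linPoly_apply, mul_pow, mul_assoc]

variable {p e : ℕ} [ExpChar K p]

theorem linPoly_apply_add (hqe : q = p ^ e) (c : ZMod N → K) (x y : K) :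
    linPoly q c (x + y) = linPoly q c x + linPoly q c y := by
  simp [linPoly_apply, add_pow_pow hqe, mul_add, sum_add_distrib]

variable [Fintype K]

theorem linPoly_apply_pow_pow (hK : Fintype.card K = q ^ N) (c : ZMod N → K) (x : K) (m : ℕ) :
    linPoly q c (x ^ q ^ m) = linPoly q (fun z => c (z - (m : ZMod N))) x := by
  refine Fintype.sum_equiv (Equiv.addRight (m : ZMod N)) _ _ fun z => ?_
  simp only [Equiv.coe_addRight, add_sub_cancel_right]
  rw [← pow_mul, ← pow_add]
  congr 1
  exact pow_pow_eq_of_natCast_eq hK (by simp [add_comm]) x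

theorem pow_pow_linPoly_apply (hK : Fintype.card K = q ^ N) (hqe : q = p ^ e) (c : ZMod N → K)
    (x : K) (m : ℕ) :
    linPoly q c x ^ q ^ m = linPoly q (fun z => c (z - (m : ZMod N)) ^ q ^ m) x := by
  trans linPoly q (fun z => c z ^ q ^ m) (x ^ q ^ m)
  · simp_rw [linPoly_apply, sum_pow_pow hqe, mul_pow, ← pow_mul, mul_comm (q ^ _) (q ^ m)]
  · exact linPoly_apply_pow_pow hK _ x m

theorem linPoly_apply_linPoly (hK : Fintype.card K = q ^ N) (hqe : q = p ^ e) (D c : ZMod N → K)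
    (x : K) : linPoly q D (linPoly q c x) =
      linPoly q (fun z => ∑ l, D l * c (z - l) ^ q ^ l.val) x := by
  have hsum : (fun z => ∑ l, D l * c (z - l) ^ q ^ l.val) =
      ∑ l, D l • fun z => c (z - l) ^ q ^ l.val := by
    ext z
    simp [Finset.sum_apply]
  rw [hsum, map_sum, Finset.sum_apply, linPoly_apply]
  simp [pow_pow_linPoly_apply hK hqe]

theorem linPoly_apply_mul_pow_pow_linPoly (hK : Fintype.card K = q ^ N) (hqe : q = p ^ e)
    (D E : ZMod N → K) (u x : K) (j : ℕ) :
    linPoly q D (u * linPoly q E x ^ q ^ j) =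
      linPoly q (fun z =>
        linPoly q (fun l => D l * (E (z - l - (j : ZMod N)) ^ q ^ j) ^ q ^ l.val) u) x := by
  have hmul : u * linPoly q E x ^ q ^ j =
      linPoly q (u • fun z => E (z - (j : ZMod N)) ^ q ^ j) x := by
    simp [pow_pow_linPoly_apply hK hqe]
  rw [hmul, linPoly_apply_linPoly hK hqe]
  simp only [linPoly_apply, Pi.smul_apply, smul_eq_mul, mul_pow, mul_comm (u ^ q ^ _), mul_assoc]

theorem linPoly_single (hK : Fintype.card K = q ^ N) (m : ℕ) (a : K) :
    linPoly q (Pi.single (m : ZMod N) a) = fun x => a * x ^ q ^ m := by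
  funext x
  rw [linPoly_apply, Fintype.sum_eq_single (m : ZMod N) fun z hz => by simp [hz]]
  simp [pow_pow_eq_of_natCast_eq hK (ZMod.natCast_mod m N) x]

end LinPoly

section ArithProg

variable {N : ℕ}

def arithProg (y σ : ZMod N) (k : ℕ) : Finset (ZMod N) :=
  (range (k + 1)).image fun i : ℕ => y + σ * i

theorem mem_arithProg {y σ v : ZMod N} {k : ℕ} :
    v ∈ arithProg y σ k ↔ ∃ i ≤ k, y + σ * i = v := by
  simp [arithProg]

theorem card_arithProg_le (y σ : ZMod N) (k : ℕ) : #(arithProg y σ k) ≤ k + 1 :=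
  card_image_le.trans (card_range _).le

theorem card_arithProg {σ : ZMod N} (hσ : IsUnit σ) (y : ZMod N) {k : ℕ} (hk : k < N) :
    #(arithProg y σ k) = k + 1 := by
  rw [arithProg, card_image_of_injOn, card_range]
  intro i hi j hj hij
  simp only [coe_range, Set.mem_Iio] at hi hj
  have hij' : (i : ZMod N) = j := hσ.mul_left_cancel (add_left_cancel hij)
  rw [← ZMod.val_cast_of_lt (by omega : i < N), ← ZMod.val_cast_of_lt (by omega : j < N), hij']

theorem sub_notMem_arithProg {σ : ZMod N} (hσ : IsUnit σ) (y : ZMod N) {k : ℕ}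
    (hk : k + 1 < N) : y - σ ∉ arithProg y σ k := by
  rintro hmem
  obtain ⟨i, hi, h⟩ := mem_arithProg.1 hmem
  have hzero : ((i + 1 : ℕ) : ZMod N) = 0 :=
    hσ.mul_left_cancel (by push_cast; linear_combination h)
  rw [ZMod.natCast_eq_zero_iff] at hzero
  exact absurd (Nat.le_of_dvd (by omega) hzero) (by omega)

theorem eq_of_mem_arithProg_of_sub_notMem {y σ v : ZMod N} {k : ℕ} (hv : v ∈ arithProg y σ k)
    (hv' : v - σ ∉ arithProg y σ k) : v = y := by
  obtain ⟨i, hi, rfl⟩ := mem_arithProg.1 hv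
  rcases i with _ | i
  · simp
  · exact absurd (mem_arithProg.2 ⟨i, by omega, by push_cast; ring⟩) hv'

/-- A progression of `k + 1` terms inside `T` fills `T`, and its first term is then the only
`v ∈ T` with `v - σ ∉ T`. -/
theorem eq_of_arithProg_subset {σ y y' : ZMod N} {k : ℕ} {T : Finset (ZMod N)} (hσ : IsUnit σ)
    (hk : k + 1 < N) (hT : #T ≤ k + 1) (hy : arithProg y σ k ⊆ T)
    (hy' : arithProg y' σ k ⊆ T) : y = y' := by
  have hP : ∀ y, arithProg y σ k ⊆ T → arithProg y σ k = T := fun y hy =>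
    eq_of_subset_of_card_le hy (hT.trans (card_arithProg hσ y (by omega)).ge)
  have hPP : arithProg y σ k = arithProg y' σ k := (hP y hy).trans (hP y' hy').symm
  refine (eq_of_mem_arithProg_of_sub_notMem (σ := σ) (k := k) ?_ ?_).symm <;> rw [hPP]
  · exact mem_arithProg.2 ⟨0, by omega, by simp⟩
  · exact sub_notMem_arithProg hσ y' hk

theorem mem_arithProg_zero_iff [NeZero N] (u : (ZMod N)ˣ) {k : ℕ} (hk : k < N) {z : ZMod N} :
    z ∈ arithProg 0 u k ↔ (↑u⁻¹ * z).val ≤ k := by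
  rw [mem_arithProg]
  constructor
  · rintro ⟨i, hi, rfl⟩
    rw [zero_add, Units.inv_mul_cancel_left, ZMod.val_cast_of_lt (by omega)]
    exact hi
  · intro h
    exact ⟨_, h, by rw [ZMod.natCast_zmod_val, zero_add, Units.mul_inv_cancel_left]⟩

end ArithProg

section ZModTwoMul

variable {n : ℕ}

theorem natCast_add_self_eq_zero : (n : ZMod (2 * n)) + n = 0 := by
  rw [← two_mul]
  exact_mod_cast ZMod.natCast_self (2 * n)

theorem neg_natCast_eq_self : -(n : ZMod (2 * n)) = n :=
  neg_eq_of_add_eq_zero_left natCast_add_self_eq_zero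

theorem not_isUnit_natCast_of_two_le (hn : 2 ≤ n) : ¬ IsUnit (n : ZMod (2 * n)) := by
  rw [ZMod.isUnit_iff_coprime]
  intro h
  have := Nat.Coprime.eq_one_of_dvd h (dvd_mul_left n 2)
  omega

theorem IsUnit.mul_natCast_eq_self [NeZero (2 * n)] {σ : ZMod (2 * n)} (hσ : IsUnit σ) :
    σ * n = n := by
  rw [← ZMod.natCast_zmod_val σ, ZMod.isUnit_iff_coprime] at hσ
  obtain ⟨c, hc⟩ : Odd σ.val := hσ.coprime_mul_right_right.odd_of_right
  rw [← ZMod.natCast_zmod_val σ, hc]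
  push_cast
  linear_combination (c : ZMod (2 * n)) * natCast_add_self_eq_zero

theorem val_add_natCast_of_lt {v : ZMod (2 * n)} (hv : v.val < n) : (v + n).val = v.val + n := by
  rw [ZMod.val_add_of_lt] <;> rw [ZMod.val_cast_of_lt (by omega)]
  omega

theorem exists_eq_or_eq_add_natCast [NeZero (2 * n)] (w : ZMod (2 * n)) :
    ∃ i : ℕ, 0 < i ∧ i ≤ n ∧ (w = i ∨ w = i + n) := by
  rcases Nat.eq_zero_or_pos w.val with h0 | hpos
  · refine ⟨n, ?_, le_rfl, Or.inr ?_⟩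
    · have := NeZero.ne (2 * n); omega
    · rw [natCast_add_self_eq_zero, ← ZMod.val_eq_zero, h0]
  rcases le_or_gt w.val n with hle | hgt
  · exact ⟨w.val, hpos, hle, Or.inl (ZMod.natCast_zmod_val w).symm⟩
  · refine ⟨w.val - n, by omega, by have := w.val_lt; omega, Or.inr ?_⟩
    rw [← Nat.cast_add, Nat.sub_add_cancel hgt.le, ZMod.natCast_zmod_val]

theorem eq_zero_or_eq_natCast_of_val_le [NeZero (2 * n)] {v : ZMod (2 * n)} (hv : v.val ≤ n)
    (hv' : (v + n).val ≤ n) : v = 0 ∨ v = n := by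
  rcases hv.lt_or_eq with hlt | heq
  · rw [val_add_natCast_of_lt hlt] at hv'
    exact Or.inl ((ZMod.val_eq_zero v).1 (by omega))
  · exact Or.inr (by rw [← ZMod.natCast_zmod_val v, heq])

end ZModTwoMul

section Progressions

variable {n k : ℕ} [NeZero (2 * n)]

theorem exists_not_val_le (hk1 : 2 ≤ k) (hk2 : k + 2 ≤ 2 * n) (hkn : k ≠ n ∨ 3 ≤ n)
    {σ : ZMod (2 * n)} (hσ : IsUnit σ) (y : ZMod (2 * n)) :
    ∃ i : ℕ, 0 < i ∧ i < k ∧ ¬ ((y + σ * i).val ≤ k ∧ (y + σ * i + n).val ≤ k) := by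
  by_contra! h
  have : Nontrivial (ZMod (2 * n)) := ZMod.nontrivial_iff.2 (by omega)
  rcases lt_trichotomy k n with hlt | rfl | hgt
  · obtain ⟨h1, h2⟩ := h 1 one_pos (by omega)
    rw [val_add_natCast_of_lt (by omega)] at h2
    omega
  · have hmem : ∀ i, 0 < i → i < k → y + σ * i = 0 ∨ y + σ * i = k := fun i hi hik =>
      eq_zero_or_eq_natCast_of_val_le (h i hi hik).1 (h i hi hik).2
    have hσ' : σ = (y + σ * (2 : ℕ)) - (y + σ * (1 : ℕ)) := by push_cast; ring
    rcases hmem 1 one_pos (by omega) with h1 | h1 <;>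
      rcases hmem 2 two_pos (by omega) with h2 | h2 <;>
      rw [h1, h2] at hσ' <;>
      simp only [sub_self, sub_zero, zero_sub, neg_natCast_eq_self] at hσ'
    · exact hσ.ne_zero hσ'
    · exact not_isUnit_natCast_of_two_le (by omega) (hσ' ▸ hσ)
    · exact not_isUnit_natCast_of_two_le (by omega) (hσ' ▸ hσ)
    · exact hσ.ne_zero hσ'
  · -- every `v` is `y + σ i` or `y + σ i + n` with `0 < i ≤ n < k`
    have hall : ∀ v : ZMod (2 * n), v.val ≤ k := by
      intro v
      obtain ⟨u, rfl⟩ := hσ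
      obtain ⟨i, hi, hin, hw⟩ := exists_eq_or_eq_add_natCast (n := n) (↑u⁻¹ * (v - y))
      have hv : v = y + u * (↑u⁻¹ * (v - y)) := by rw [Units.mul_inv_cancel_left]; ring
      rcases hw with hw | hw <;> rw [hw] at hv
      · exact hv ▸ (h i hi (by omega)).1
      · rw [mul_add, (Units.isUnit u).mul_natCast_eq_self, ← add_assoc] at hv
        exact hv ▸ (h i hi (by omega)).2
    have := hall (k + 1 : ℕ)
    rw [ZMod.val_cast_of_lt (by omega)] at this
    omega

theorem exists_not_mem_arithProg (hk1 : 2 ≤ k) (hk2 : k + 2 ≤ 2 * n) (hkn : k ≠ n ∨ 3 ≤ n)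
    {s t : ZMod (2 * n)} (hs : IsUnit s) (ht : IsUnit t) (y : ZMod (2 * n)) :
    ∃ i : ℕ, 0 < i ∧ i < k ∧
      ¬ (y + s * i ∈ arithProg 0 t k ∧ y + s * i + n ∈ arithProg 0 t k) := by
  obtain ⟨u, rfl⟩ := ht
  obtain ⟨i, hi, hik, h⟩ :=
    exists_not_val_le hk1 hk2 hkn ((Units.isUnit u⁻¹).mul hs) (↑u⁻¹ * y)
  refine ⟨i, hi, hik, ?_⟩
  rw [mem_arithProg_zero_iff u (by omega), mem_arithProg_zero_iff u (by omega)]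
  convert h using 4
  · ring
  · rw [mul_add, (Units.isUnit u⁻¹).mul_natCast_eq_self]
    ring

theorem subsingleton_of_forall_add_mem_arithProg (hk1 : 2 ≤ k) (hk2 : k + 2 ≤ 2 * n)
    (hkn : k ≠ n ∨ 3 ≤ n) {s t : ZMod (2 * n)} (hs : IsUnit s) (ht : IsUnit t)
    {A B : Set (ZMod (2 * n))} (hA : A.Nonempty) (hB : B.Nonempty)
    (hmid : ∀ a ∈ A, ∀ b ∈ B, ∀ i : ℕ, 0 < i → i < k → a + b + s * i ∈ arithProg 0 t k)
    (hend : ∀ a ∈ A, ∀ b ∈ B, ∀ i : ℕ, (i = 0 ∨ i = k) → a + b + s * i ∉ arithProg 0 t k →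
      a + n ∈ A ∧ b + n ∈ B) :
    A.Subsingleton ∧ B.Subsingleton := by
  have hprog : ∀ a ∈ A, ∀ b ∈ B, arithProg (a + b) s k ⊆ arithProg 0 t k := by
    intro a ha b hb v hv
    obtain ⟨i, hik, rfl⟩ := mem_arithProg.1 hv
    by_contra hi
    have hi' : i = 0 ∨ i = k := by
      by_contra! h'
      exact hi (hmid a ha b hb i (by omega) (by omega))
    obtain ⟨ha', -⟩ := hend a ha b hb i hi' hi
    obtain ⟨j, hj, hjk, hnot⟩ := exists_not_mem_arithProg hk1 hk2 hkn hs ht (a + b)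
    refine hnot ⟨hmid a ha b hb j hj hjk, ?_⟩
    convert hmid _ ha' b hb j hj hjk using 1
    ring
  have huniq : ∀ y y', arithProg y s k ⊆ arithProg 0 t k → arithProg y' s k ⊆ arithProg 0 t k →
      y = y' := fun _ _ => eq_of_arithProg_subset hs (by omega) (card_arithProg_le 0 t k)
  obtain ⟨a₀, ha₀⟩ := hA
  obtain ⟨b₀, hb₀⟩ := hB
  exact ⟨fun a ha a' ha' =>
      add_right_cancel (huniq _ _ (hprog a ha b₀ hb₀) (hprog a' ha' b₀ hb₀)),
    fun b hb b' hb' => add_left_cancel (huniq _ _ (hprog a₀ ha₀ b hb) (hprog a₀ ha₀ b' hb'))⟩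

end Progressions

section Codes

variable {K : Type*} [Field K] {q n s k : ℕ} {γ : K}

theorem monomial_mem_DFun_of_lt (hq : q ≠ 0) {i : ℕ} (hi : 0 < i) (hik : i < k) (c : K) :
    (fun x => c * x ^ q ^ (s * i)) ∈ DFun q s n k γ := by
  refine ⟨0, 0, by simp [hq], by simp [hq], fun j => if j = i then c else 0, funext fun x => ?_⟩
  simp [ite_mul, hi, hik]

theorem monomial_zero_mem_DFun (hq : q ≠ 0) {a : K} (ha : a ^ q ^ n = a) :
    (fun x => a * x ^ q ^ (s * 0)) ∈ DFun q s n k γ :=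
  ⟨a, 0, ha, by simp [hq], 0, by simp⟩

theorem monomial_top_mem_DFun (hq : q ≠ 0) {b : K} (hb : b ^ q ^ n = b) :
    (fun x => γ * b * x ^ q ^ (s * k)) ∈ DFun q s n k γ :=
  ⟨0, b, by simp [hq], hb, 0, by simp⟩

variable [Fintype K] [NeZero (2 * n)] {t : ℕ} {θ : K}

theorem coeff_eq_zero_of_linPoly_mem_DFun (hq : 1 < q) (hK : Fintype.card K = q ^ (2 * n))
    {G : ZMod (2 * n) → K} (hG : linPoly q G ∈ DFun q t n k θ) {z : ZMod (2 * n)}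
    (hz : z ∉ arithProg 0 (t : ZMod (2 * n)) k) : G z = 0 := by
  obtain ⟨a, b, -, -, c, hc⟩ := hG
  have hT : ∀ i ≤ k, z ≠ ((t * i : ℕ) : ZMod (2 * n)) := fun i hi h =>
    hz (mem_arithProg.2 ⟨i, hi, by rw [h]; push_cast; ring⟩)
  have hG : G = Pi.single ((t * 0 : ℕ) : ZMod (2 * n)) a +
      ∑ i ∈ Ioo 0 k, Pi.single ((t * i : ℕ) : ZMod (2 * n)) (c i) +
      Pi.single ((t * k : ℕ) : ZMod (2 * n)) (θ * b) := by
    apply linPoly_injective hq hK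
    rw [hc]
    simp only [map_add, map_sum, linPoly_single hK]
    funext x
    simp [Finset.sum_apply]
  rw [hG]
  simp only [Pi.add_apply, Finset.sum_apply, Pi.single_eq_of_ne (hT _ (Nat.zero_le k)),
    Pi.single_eq_of_ne (hT k le_rfl)]
  rw [sum_eq_zero fun i hi => Pi.single_eq_of_ne (hT i (mem_Ioo.1 hi).2.le) _]
  simp

variable {p e : ℕ} [ExpChar K p]

theorem coeff_comp_eq_zero (hq : 1 < q) (hK : Fintype.card K = q ^ (2 * n)) (hqe : q = p ^ e)
    {D E : ZMod (2 * n) → K} {u : K} {j : ℕ}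
    (h : (fun x => linPoly q D (u * linPoly q E x ^ q ^ j)) ∈ DFun q t n k θ) {z : ZMod (2 * n)}
    (hz : z ∉ arithProg 0 (t : ZMod (2 * n)) k) :
    linPoly q (fun l => D l * (E (z - l - (j : ZMod (2 * n))) ^ q ^ j) ^ q ^ l.val) u = 0 := by
  have hfun : (fun x => linPoly q D (u * linPoly q E x ^ q ^ j)) = linPoly q (fun z =>
      linPoly q (fun l => D l * (E (z - l - (j : ZMod (2 * n))) ^ q ^ j) ^ q ^ l.val) u) :=
    funext fun x => linPoly_apply_mul_pow_pow_linPoly hK hqe D E u x j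
  rw [hfun] at h
  exact coeff_eq_zero_of_linPoly_mem_DFun hq hK h hz

theorem add_mem_of_forall_mem_DFun (hq : 1 < q) (hK : Fintype.card K = q ^ (2 * n))
    (hqe : q = p ^ e) {D E : ZMod (2 * n) → K} {j : ℕ}
    (hall : ∀ u, (fun x => linPoly q D (u * linPoly q E x ^ q ^ j)) ∈ DFun q t n k θ)
    {a b : ZMod (2 * n)} (ha : D a ≠ 0) (hb : E b ≠ 0) :
    a + b + j ∈ arithProg 0 (t : ZMod (2 * n)) k := by
  by_contra hz
  have hzero :
      (fun l => D l * (E (a + b + j - l - (j : ZMod (2 * n))) ^ q ^ j) ^ q ^ l.val) = 0 :=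
    linPoly_injective hq hK (funext fun u => by
      rw [map_zero]
      exact coeff_comp_eq_zero hq hK hqe (hall u) hz)
  have hab := congrFun hzero a
  rw [show a + b + j - a - j = b by ring] at hab
  simp [ha, hb] at hab

/-- The elements `w + w ^ q ^ n` lie in `F_{q^n}`, so vanishing on `F_{q^n}` becomes an identity
in `w` on all of `K`, which pairs the coefficients at `l` and `l + n`. -/
theorem add_add_natCast_eq_zero (hq : 1 < q) (hK : Fintype.card K = q ^ (2 * n))
    (hqe : q = p ^ e)
    {β : ZMod (2 * n) → K} (h : ∀ w, linPoly q β (w + w ^ q ^ n) = 0) (l : ZMod (2 * n)) :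
    β l + β (l + n) = 0 := by
  have hzero : β + (fun z => β (z - n)) = 0 := linPoly_injective hq hK (funext fun w => by
    simpa [linPoly_apply_add hqe, linPoly_apply_pow_pow hK] using h w)
  simpa [sub_eq_add_neg, neg_natCast_eq_self] using congrFun hzero l

theorem ne_zero_of_forall_fixed_mem_DFun (hq : 1 < q) (hK : Fintype.card K = q ^ (2 * n))
    (hqe : q = p ^ e) {D E : ZMod (2 * n) → K} {c : K} (hc : c ≠ 0) {j : ℕ}
    (hfix : ∀ v, v ^ q ^ n = v →
      (fun x => linPoly q D (c * v * linPoly q E x ^ q ^ j)) ∈ DFun q t n k θ)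
    {a b : ZMod (2 * n)} (ha : D a ≠ 0) (hb : E b ≠ 0)
    (hz : a + b + j ∉ arithProg 0 (t : ZMod (2 * n)) k) :
    D (a + n) ≠ 0 ∧ E (b + n) ≠ 0 := by
  set β : ZMod (2 * n) → K := fun l =>
    D l * (E (a + b + j - l - (j : ZMod (2 * n))) ^ q ^ j) ^ q ^ l.val * c ^ q ^ l.val
  have hpair := add_add_natCast_eq_zero hq hK hqe (β := β) (fun w => by
    have hw : (w + w ^ q ^ n) ^ q ^ n = w + w ^ q ^ n := by
      rw [add_pow_pow hqe, ← pow_mul, ← pow_add, ← two_mul, ← hK, FiniteField.pow_card, add_comm]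
    rw [← linPoly_apply_mul]
    exact coeff_comp_eq_zero hq hK hqe (hfix _ hw) hz) a
  have hβa : β a ≠ 0 := by simp [β, ha, hb, hc, show a + b + j - a - j = b by ring]
  have hβan : β (a + n) ≠ 0 := fun h0 => hβa (by simpa [h0] using hpair)
  have hshift : a + b + j - (a + n) - (j : ZMod (2 * n)) = b + n := by
    linear_combination (-1 : ZMod (2 * n)) * natCast_add_self_eq_zero
  simp only [β, hshift] at hβan
  exact ⟨left_ne_zero_of_mul (left_ne_zero_of_mul hβan),
    fun h0 => hβan (by simp [h0, show q ≠ 0 by omega])⟩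

theorem supports_subsingleton_of_equiv (hq : 1 < q) (hK : Fintype.card K = q ^ (2 * n))
    (hqe : q = p ^ e)
    (hs : Nat.Coprime s (2 * n)) (ht : Nat.Coprime t (2 * n))
    (hk1 : 2 ≤ k) (hk2 : k + 2 ≤ 2 * n) (hkn : k ≠ n ∨ 3 ≤ n) (hγ : γ ≠ 0) (ρ : K ≃+* K)
    {D E : ZMod (2 * n) → K} (hD : ∃ a, D a ≠ 0) (hE : ∃ b, E b ≠ 0)
    (hequiv : ∀ c j, (fun x => c * x ^ q ^ j) ∈ DFun q s n k γ →
      (fun x => linPoly q D (ρ c * linPoly q E x ^ q ^ j)) ∈ DFun q t n k θ) :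
    {a | D a ≠ 0}.Subsingleton ∧ {b | E b ≠ 0}.Subsingleton := by
  have hq0 : q ≠ 0 := by omega
  refine subsingleton_of_forall_add_mem_arithProg hk1 hk2 hkn
    ((ZMod.isUnit_iff_coprime s _).2 hs) ((ZMod.isUnit_iff_coprime t _).2 ht) hD hE ?_ ?_
  · intro a ha b hb i hi hik
    have hall : ∀ u, (fun x => linPoly q D (u * linPoly q E x ^ q ^ (s * i))) ∈ DFun q t n k θ :=
      fun u => by simpa using hequiv (ρ.symm u) _ (monomial_mem_DFun_of_lt hq0 hi hik _)
    simpa using add_mem_of_forall_mem_DFun hq hK hqe hall ha hb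
  · rintro a ha b hb i hi hz
    rcases hi with hi | hi <;> subst i
    · refine ne_zero_of_forall_fixed_mem_DFun (θ := θ) hq hK hqe one_ne_zero (j := s * 0)
        (fun v hv => ?_) ha hb (by simpa using hz)
      simpa using hequiv (ρ.symm v) _ (monomial_zero_mem_DFun hq0 (by rw [← map_pow, hv]))
    · refine ne_zero_of_forall_fixed_mem_DFun (θ := θ) hq hK hqe (c := ρ γ) (by simpa using hγ)
        (j := s * k)
        (fun v hv => ?_) ha hb (by simpa using hz)
      simpa using hequiv (γ * ρ.symm v) _ (monomial_top_mem_DFun hq0 (by rw [← map_pow, hv]))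

end Codes

theorem equivalence_maps_are_monomials_general (q s t n k : ℕ)
    (hs : Nat.Coprime s (2 * n)) (ht : Nat.Coprime t (2 * n))
    (hk1 : 1 < k) (hk2 : k < 2 * n - 1) (hkn : k ≠ n ∨ 3 ≤ n)
    (K : Type*) [Field K] [Fintype K] (hK : Fintype.card K = q ^ (2 * n))
    (γ θ : K)
    (hγ : ¬ ∃ z : K, z ^ q = z ∧ z ^ 2 = γ ^ (∑ i ∈ Finset.range (2 * n), q ^ i))
    (φ₁ φ₂ : K → K) (ρ : K ≃+* K)
    (h₁ : IsLinPoly q (2 * n) φ₁) (h₁b : Function.Bijective φ₁)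
    (h₂ : IsLinPoly q (2 * n) φ₂) (h₂b : Function.Bijective φ₂)
    (heq : ∀ f ∈ DFun q s n k γ,
      (φ₁ ∘ (⇑ρ ∘ f ∘ ⇑ρ.symm) ∘ φ₂) ∈ DFun q t n k θ) :
    (∃ (d : K) (l : ℕ), d ≠ 0 ∧ φ₁ = fun x => d * x ^ q ^ l) ∧
    (∃ (g : K) (j : ℕ), g ≠ 0 ∧ φ₂ = fun x => g * x ^ q ^ j) := by
  have : NeZero (2 * n) := ⟨by omega⟩
  have hq := one_lt_of_card_eq_pow hK
  obtain ⟨p, e, _, hqe⟩ := exists_expChar_pow_eq hK (by omega)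
  obtain ⟨D, rfl⟩ := h₁.exists_eq_linPoly
  obtain ⟨E, rfl⟩ := h₂.exists_eq_linPoly
  have hγ0 : γ ≠ 0 := by
    rintro rfl
    refine hγ ⟨0, zero_pow (by omega), ?_⟩
    rw [zero_pow two_ne_zero,
      zero_pow (sum_pos (fun i _ => by positivity) (nonempty_range_iff.2 (by omega))).ne']
  have hsupp := supports_subsingleton_of_equiv hq hK hqe hs ht (by omega) (by omega) hkn hγ0 ρ
    (exists_ne_zero_of_injective h₁b.1) (exists_ne_zero_of_injective h₂b.1)
    fun c j hf => by simpa [Function.comp_def] using heq _ hf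
  exact ⟨exists_eq_monomial h₁b.1 hsupp.1, exists_eq_monomial h₂b.1 hsupp.2⟩

/-- If `(φ₁, φ₂, ρ)` is an equivalence map between `D_{k,s}(γ)` and `D_{k,t}(θ)`
with `1 < k < 2n-1` and (`k ≠ n` or `n ≥ 3`), then `φ₁` and `φ₂` are monomials,
i.e. `φ₁ = d X^{q^l}` and `φ₂ = g X^{q^j}` with `d, g ≠ 0`. -/
theorem equivalence_maps_are_monomials (q s t n k : ℕ) (hn : 0 < n)
    (hs : Nat.Coprime s (2 * n)) (ht : Nat.Coprime t (2 * n))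
    (hk1 : 1 < k) (hk2 : k < 2 * n - 1) (hkn : k ≠ n ∨ 3 ≤ n)
    (K : Type*) [Field K] [Fintype K] (hK : Fintype.card K = q ^ (2 * n))
    (γ θ : K)
    (hγ : ¬ ∃ z : K, z ^ q = z ∧ z ^ 2 = γ ^ (∑ i ∈ Finset.range (2 * n), q ^ i))
    (hθ : ¬ ∃ z : K, z ^ q = z ∧ z ^ 2 = θ ^ (∑ i ∈ Finset.range (2 * n), q ^ i))
    (φ₁ φ₂ : K → K) (ρ : K ≃+* K)
    (h₁ : IsLinPoly q (2 * n) φ₁) (h₁b : Function.Bijective φ₁)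
    (h₂ : IsLinPoly q (2 * n) φ₂) (h₂b : Function.Bijective φ₂)
    (heq : ∀ f ∈ DFun q s n k γ,
      (φ₁ ∘ (⇑ρ ∘ f ∘ ⇑ρ.symm) ∘ φ₂) ∈ DFun q t n k θ) :
    (∃ (d : K) (l : ℕ), d ≠ 0 ∧ φ₁ = fun x => d * x ^ q ^ l) ∧
    (∃ (g : K) (j : ℕ), g ≠ 0 ∧ φ₂ = fun x => g * x ^ q ^ j) :=
  equivalence_maps_are_monomials_general q s t n k hs ht hk1 hk2 hkn K hK γ θ hγ φ₁ φ₂ ρ h₁ h₁b h₂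
    h₂b heq
end
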